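/- The coefficient sequence of the Boros–Moll polynomial P_m(x) = ∑_{k=0}^m c_k(m)(x+1)^k, with c_k(m) = 2^{-2m+k}·C(2m-2k,m-k)·C(m+k,k), is log-concave: its coefficients d_k satisfy d_k² ≥ d_{k-1}d_{k+1} for 1 ≤ k ≤ m-1. -/

import Mathlib

noncomputable def bmCoeff (m k : ℕ) : ℝ :=
  (2 : ℝ) ^ k / (2 : ℝ) ^ (2 * m) * ((2 * m - 2 * k).choose (m - k) : ℝ) *
    ((m + k).choose k : ℝ)

/-!
The Boros–Moll numbers satisfy the two-term recurrence
`2(m+1) c_j(m+1) = (2m+2j) c_{j-1}(m) + (2m+1-2j) c_j(m)` (with `c_{-1} = c_{m+1} = 0`), a consequence of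
`(n+1) C(2n+2,n+1) = 2(2n+1) C(2n,n)` and the absorption identities. Summing it against `C(j,l)` and using
Pascal's rule gives `2(m+1) d_l(m+1) = 2(m+l) d_{l-1}(m) + (4m+2l+3) d_l(m)` (with `d_{-1} = 0`).
For `X = 2pa + qb`, `Y = 2(p+1)b + (q+2)c`, `Z = 2(p+2)c + (q+4)e` one has the identity
`Y² - XZ = 4p(p+2)(b² - ac) + 2p(q+4)(bc - ae) + q(q+4)(c² - be) + 4(b+c)²`,
so log-concavity of `d(m)` passes to `d(m+1)`; the middle term is nonnegative because `d_l(m) > 0` for `l ≤ m`.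
-/

open Finset Nat

lemma bmCoeff_pos (m k : ℕ) : 0 < bmCoeff m k := by
  unfold bmCoeff
  have := choose_pos (n := 2 * m - 2 * k) (k := m - k) (by omega)
  have := choose_pos (n := m + k) (k := k) (by omega)
  positivity

lemma bmCoeff_add_left_eq (k n : ℕ) :
    bmCoeff (k + n) k = 2 ^ k / 4 ^ (k + n) * centralBinom n * (2 * k + n).choose k := by
  rw [bmCoeff, centralBinom, show 2 * (k + n) - 2 * k = 2 * n by omega,
    show k + n - k = n by omega, show k + n + k = 2 * k + n by omega, pow_mul]
  norm_num

lemma cast_succ_mul_centralBinom_succ (n : ℕ) :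
    ((n : ℝ) + 1) * centralBinom (n + 1) = 2 * (2 * n + 1) * centralBinom n := by
  exact_mod_cast succ_mul_centralBinom_succ n

lemma two_mul_succ_mul_bmCoeff_succ_zero (m : ℕ) :
    2 * ((m : ℝ) + 1) * bmCoeff (m + 1) 0 = (2 * m + 1) * bmCoeff m 0 := by
  have h := cast_succ_mul_centralBinom_succ m
  have e₀ := bmCoeff_add_left_eq 0 m
  have e₁ := bmCoeff_add_left_eq 0 (m + 1)
  simp only [zero_add, pow_zero, mul_zero, choose_zero_right, Nat.cast_one, mul_one] at e₀ e₁
  rw [e₀, e₁, pow_succ]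
  field_simp
  linear_combination 2 * h

lemma two_mul_succ_mul_bmCoeff_succ_self (m : ℕ) :
    2 * ((m : ℝ) + 1) * bmCoeff (m + 1) (m + 1) = 2 * (2 * m + 1) * bmCoeff m m := by
  have h := cast_succ_mul_centralBinom_succ m
  have e₀ := bmCoeff_add_left_eq m 0
  have e₁ := bmCoeff_add_left_eq (m + 1) 0
  simp only [add_zero, centralBinom_zero, Nat.cast_one, mul_one, ← centralBinom_eq_two_mul_choose] at e₀ e₁
  rw [e₀, e₁, pow_succ, pow_succ]
  field_simp
  linear_combination 2 * h

lemma two_mul_succ_mul_bmCoeff_succ_succ {m i : ℕ} (h : i < m) :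
    2 * ((m : ℝ) + 1) * bmCoeff (m + 1) (i + 1)
      = (2 * m + 2 * i + 2) * bmCoeff m i + (2 * m - 2 * i - 1) * bmCoeff m (i + 1) := by
  obtain ⟨n, rfl⟩ : ∃ n, m = i + n + 1 := ⟨m - i - 1, by omega⟩
  have hB := cast_succ_mul_centralBinom_succ n
  have hC₁ : ((2 * i + n + 2 : ℕ) : ℝ) * (2 * i + n + 1).choose i
      = (2 * i + n + 2).choose (i + 1) * ((i : ℝ) + 1) := by
    exact_mod_cast add_one_mul_choose_eq (2 * i + n + 1) i
  have hC₂ : ((2 * i + n + 2).choose (i + 1) : ℝ) * ((2 * i + n + 3 : ℕ) : ℝ)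
      = (2 * i + n + 3).choose (i + 1) * ((i + n + 2 : ℕ) : ℝ) := by
    have := choose_mul_succ_eq (2 * i + n + 2) (i + 1)
    rw [show 2 * i + n + 2 + 1 - (i + 1) = i + n + 2 by omega] at this
    exact_mod_cast this
  have e₁ := bmCoeff_add_left_eq (i + 1) (n + 1)
  have e₂ := bmCoeff_add_left_eq i (n + 1)
  have e₃ := bmCoeff_add_left_eq (i + 1) n
  rw [show i + 1 + (n + 1) = i + n + 1 + 1 by ring, show 2 * (i + 1) + (n + 1) = 2 * i + n + 3 by ring]
    at e₁
  rw [show i + (n + 1) = i + n + 1 by ring, show 2 * i + (n + 1) = 2 * i + n + 1 by ring] at e₂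
  rw [show i + 1 + n = i + n + 1 by ring, show 2 * (i + 1) + n = 2 * i + n + 2 by ring] at e₃
  rw [e₁, e₂, e₃, pow_succ, pow_succ]
  push_cast at hC₁ hC₂ ⊢
  field_simp
  linear_combination (-2 * (centralBinom (n + 1) : ℝ)) * hC₂ - 4 * (centralBinom (n + 1) : ℝ) * hC₁
    + 2 * ((2 * i + n + 2).choose (i + 1) : ℝ) * hB

-- `bmCoeff m j` is not zero for `j > m` (the subtractions truncate), so the recurrence needs the cut-off.
noncomputable def bmCoeffTrunc (m j : ℕ) : ℝ := if j ≤ m then bmCoeff m j else 0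

lemma bmCoeffTrunc_of_le {m j : ℕ} (h : j ≤ m) : bmCoeffTrunc m j = bmCoeff m j := if_pos h

lemma bmCoeffTrunc_of_lt {m j : ℕ} (h : m < j) : bmCoeffTrunc m j = 0 := if_neg (by omega)

lemma bmCoeffTrunc_nonneg (m j : ℕ) : 0 ≤ bmCoeffTrunc m j := by
  unfold bmCoeffTrunc
  split
  · exact (bmCoeff_pos m j).le
  · exact le_rfl

lemma two_mul_succ_mul_bmCoeffTrunc_succ_zero (m : ℕ) :
    2 * ((m : ℝ) + 1) * bmCoeffTrunc (m + 1) 0 = (2 * m + 1) * bmCoeffTrunc m 0 := by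
  rw [bmCoeffTrunc_of_le (zero_le _), bmCoeffTrunc_of_le (zero_le _)]
  exact two_mul_succ_mul_bmCoeff_succ_zero m

lemma two_mul_succ_mul_bmCoeffTrunc_succ_succ (m i : ℕ) :
    2 * ((m : ℝ) + 1) * bmCoeffTrunc (m + 1) (i + 1)
      = (2 * m + 2 * i + 2) * bmCoeffTrunc m i + (2 * m - 2 * i - 1) * bmCoeffTrunc m (i + 1) := by
  rcases lt_trichotomy i m with h | rfl | h
  · rw [bmCoeffTrunc_of_le (by omega), bmCoeffTrunc_of_le h.le, bmCoeffTrunc_of_le h]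
    exact two_mul_succ_mul_bmCoeff_succ_succ h
  · rw [bmCoeffTrunc_of_le le_rfl, bmCoeffTrunc_of_le le_rfl, bmCoeffTrunc_of_lt (lt_add_one i),
      two_mul_succ_mul_bmCoeff_succ_self]
    ring
  · rw [bmCoeffTrunc_of_lt (by omega), bmCoeffTrunc_of_lt h, bmCoeffTrunc_of_lt (by omega)]
    ring

noncomputable def bmD (m k : ℕ) : ℝ := ∑ j ∈ range (m + 1), (j.choose k : ℝ) * bmCoeffTrunc m j

lemma bmD_nonneg (m k : ℕ) : 0 ≤ bmD m k :=
  sum_nonneg fun j _ => mul_nonneg (Nat.cast_nonneg _) (bmCoeffTrunc_nonneg m j)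

lemma bmD_pos {m k : ℕ} (h : k ≤ m) : 0 < bmD m k := by
  refine sum_pos' (fun j _ => mul_nonneg (Nat.cast_nonneg _) (bmCoeffTrunc_nonneg m j))
    ⟨k, mem_range.2 (by omega), ?_⟩
  rw [choose_self, Nat.cast_one, one_mul, bmCoeffTrunc_of_le h]
  exact bmCoeff_pos m k

lemma bmD_eq_zero {m k : ℕ} (h : m < k) : bmD m k = 0 :=
  sum_eq_zero fun j hj => by rw [choose_eq_zero_of_lt (by simp at hj; omega), Nat.cast_zero, zero_mul]

lemma two_mul_succ_mul_bmD_succ (m l : ℕ) :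
    2 * ((m : ℝ) + 1) * bmD (m + 1) l
      = ∑ i ∈ range (m + 1),
          (((i + 1).choose l : ℝ) * (2 * m + 2 * i + 2) + (i.choose l : ℝ) * (2 * m + 1 - 2 * i))
            * bmCoeffTrunc m i := by
  set f : ℕ → ℝ := fun j => (j.choose l : ℝ) * (2 * m + 1 - 2 * j) * bmCoeffTrunc m j
  have hf : ∑ i ∈ range (m + 1 + 1), f i = ∑ i ∈ range (m + 1), f i := by
    rw [sum_range_succ, add_eq_left]
    simp only [f, bmCoeffTrunc_of_lt (lt_add_one m), mul_zero]
  have hf' := sum_range_succ' f (m + 1)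
  calc 2 * ((m : ℝ) + 1) * bmD (m + 1) l
      = ∑ i ∈ range (m + 1), ((i + 1).choose l : ℝ) * (2 * m + 2 * i + 2) * bmCoeffTrunc m i
          + ∑ i ∈ range (m + 1 + 1), f i := by
        rw [bmD, sum_range_succ', hf', mul_add, mul_sum]
        have hs : ∀ i, 2 * ((m : ℝ) + 1) * (((i + 1).choose l : ℝ) * bmCoeffTrunc (m + 1) (i + 1))
            = ((i + 1).choose l : ℝ) * (2 * m + 2 * i + 2) * bmCoeffTrunc m i + f (i + 1) := by
          intro i
          rw [mul_left_comm, two_mul_succ_mul_bmCoeffTrunc_succ_succ]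
          push_cast [f]
          ring
        rw [sum_congr rfl fun i _ => hs i, sum_add_distrib]
        -- the boundary terms at `j = 0` cancel by the `j = 0` case of the recurrence
        linear_combination ((choose 0 l : ℕ) : ℝ) * two_mul_succ_mul_bmCoeffTrunc_succ_zero m
    _ = _ := by
        rw [hf, ← sum_add_distrib]
        refine sum_congr rfl fun i _ => ?_
        ring

lemma two_mul_succ_mul_bmD_succ_zero (m : ℕ) :
    2 * ((m : ℝ) + 1) * bmD (m + 1) 0 = (4 * m + 3) * bmD m 0 := by
  rw [two_mul_succ_mul_bmD_succ, bmD, mul_sum]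
  refine sum_congr rfl fun i _ => ?_
  simp only [choose_zero_right, Nat.cast_one]
  ring

lemma two_mul_succ_mul_bmD_succ_succ (m l : ℕ) :
    2 * ((m : ℝ) + 1) * bmD (m + 1) (l + 1)
      = 2 * ((m : ℝ) + l + 1) * bmD m l + (4 * m + 2 * l + 5) * bmD m (l + 1) := by
  rw [two_mul_succ_mul_bmD_succ, bmD, bmD, mul_sum, mul_sum, ← sum_add_distrib]
  refine sum_congr rfl fun i _ => ?_
  have pascal : ((i + 1).choose (l + 1) : ℝ) = i.choose l + i.choose (l + 1) := by
    exact_mod_cast choose_succ_succ' i l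
  have absorb : ((i : ℝ) + 1) * i.choose l = (i + 1).choose (l + 1) * ((l : ℝ) + 1) := by
    exact_mod_cast add_one_mul_choose_eq i l
  linear_combination (2 * (m : ℝ) + 2 * i + 2 * l + 4) * bmCoeffTrunc m i * pascal
    + 2 * bmCoeffTrunc m i * absorb

lemma recurrence_mul_le_sq {p q a b c e : ℝ} (hp : 0 ≤ p) (hq : 0 ≤ q)
    (hac : a * c ≤ b ^ 2) (hae : a * e ≤ b * c) (hbe : b * e ≤ c ^ 2) :
    (2 * p * a + q * b) * (2 * (p + 2) * c + (q + 4) * e) ≤ (2 * (p + 1) * b + (q + 2) * c) ^ 2 := by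
  have : 0 ≤ 4 * p * (p + 2) * (b ^ 2 - a * c) + 2 * p * (q + 4) * (b * c - a * e)
      + q * (q + 4) * (c ^ 2 - b * e) + 4 * (b + c) ^ 2 := by
    have := sub_nonneg.2 hac
    have := sub_nonneg.2 hae
    have := sub_nonneg.2 hbe
    positivity
  linear_combination this

lemma mul_le_mul_of_mul_le_sq {a b c e : ℝ} (hb : 0 < b) (hc : 0 < c) (he : 0 ≤ e)
    (hac : a * c ≤ b ^ 2) (hbe : b * e ≤ c ^ 2) : a * e ≤ b * c := by
  have : a * c * (b * e) ≤ b ^ 2 * c ^ 2 :=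
    mul_le_mul hac hbe (mul_nonneg hb.le he) (sq_nonneg b)
  refine le_of_mul_le_mul_right ?_ (mul_pos hb hc)
  linear_combination this

lemma bmD_mul_le_sq (m j : ℕ) : bmD m j * bmD m (j + 2) ≤ bmD m (j + 1) ^ 2 := by
  induction m generalizing j with
  | zero => simp [bmD_eq_zero (show 0 < j + 2 by omega), sq_nonneg]
  | succ m ih =>
    rcases lt_or_ge (m + 1) (j + 2) with h | h
    · simp [bmD_eq_zero h, sq_nonneg]
    suffices (2 * (m + 1) * bmD (m + 1) j) * (2 * (m + 1) * bmD (m + 1) (j + 2))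
        ≤ (2 * (m + 1) * bmD (m + 1) (j + 1)) ^ 2 by
      rw [mul_mul_mul_comm, mul_pow, ← sq] at this
      exact le_of_mul_le_mul_left this (by positivity)
    rcases j with _ | i
    · rw [two_mul_succ_mul_bmD_succ_zero, two_mul_succ_mul_bmD_succ_succ,
        two_mul_succ_mul_bmD_succ_succ]
      have := recurrence_mul_le_sq (p := m) (q := 4 * m + 3) (a := 0) (m.cast_nonneg) (by positivity)
        (by simpa using sq_nonneg (bmD m 0))
        (by simpa using mul_nonneg (bmD_nonneg m 0) (bmD_nonneg m 1)) (ih 0)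
      push_cast
      linear_combination this
    · rw [two_mul_succ_mul_bmD_succ_succ, two_mul_succ_mul_bmD_succ_succ,
        two_mul_succ_mul_bmD_succ_succ]
      have := recurrence_mul_le_sq (p := m + i + 1) (q := 4 * m + 2 * i + 5) (by positivity)
        (by positivity) (ih i)
        (mul_le_mul_of_mul_le_sq (bmD_pos (by omega)) (bmD_pos (by omega))
          (bmD_nonneg m (i + 3)) (ih i) (ih (i + 1))) (ih (i + 1))
      push_cast
      linear_combination this

lemma sum_Icc_choose_mul_bmCoeff (m k : ℕ) :
    ∑ j ∈ Icc k m, (j.choose k : ℝ) * bmCoeff m j = bmD m k := by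
  rw [bmD]
  refine sum_subset_zero_on_sdiff (fun j hj => by simp at hj ⊢; omega) ?_ ?_
  · intro j hj
    simp only [mem_sdiff, mem_range, mem_Icc, not_and, not_le] at hj
    rw [choose_eq_zero_of_lt (by omega), Nat.cast_zero, zero_mul]
  · intro j hj
    rw [bmCoeffTrunc_of_le (mem_Icc.1 hj).2]

open Finset in
theorem stmt_14 (m : ℕ) (d : ℕ → ℝ)
    (hd : ∀ k ≤ m, d k = ∑ j ∈ Icc k m, (j.choose k : ℝ) * bmCoeff m j) :
    ∀ k : ℕ, 1 ≤ k → k + 1 ≤ m → d (k - 1) * d (k + 1) ≤ d k ^ 2 := by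
  intro k hk hkm
  obtain ⟨j, rfl⟩ : ∃ j, k = j + 1 := ⟨k - 1, by omega⟩
  rw [add_tsub_cancel_right, hd j (by omega), hd (j + 1) (by omega), hd (j + 2) hkm,
    sum_Icc_choose_mul_bmCoeff, sum_Icc_choose_mul_bmCoeff, sum_Icc_choose_mul_bmCoeff]
  exact bmD_mul_le_sq m j
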